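/- If PA is consistent, then the Gödel sentence δ is not provable in PA; that is, given a sentence δ with PA ⊢ δ ↔ ∀x ¬Pf*(x, ⌜δ⌝‾) (obtained by diagonalization applied to ∀x ¬Pf*(x,v)), the assumption PA ⊢ δ implies that PA is inconsistent. -/
import Mathlib


open scoped Classical

/-- Abstract setting for Mendelson's first-order system `S` of Peano Arithmetic (`PA`),
together with a fixed Gödel numbering of its expressions (odd numbers for primitive
symbols, sequences coded by `∏ pᵢ ^ ⌜Xᵢ⌝`) and the arithmetized proof predicates. -/
structure PASystem where
  /-- the formulas of `PA` -/
  Formula : Type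
  /-- the formulas of `PA` with only the variable `v` free -/
  Formula1 : Type
  /-- the formulas of `PA` with only the two variables `x`, `v` free -/
  Formula2 : Type
  /-- the formulas of `PA` with only three variables free -/
  Formula3 : Type
  /-- `IsSentence α` : `α` is a sentence (closed formula) of `PA` -/
  IsSentence : Formula → Prop
  /-- `Provable α` : `⊢_PA α`, i.e. `α` is a theorem of `PA` (axioms of Mendelson's
  system `S`, inference rules modus ponens and generalization) -/
  Provable : Formula → Prop
  /-- negation `¬α` -/
  neg : Formula → Formula
  /-- negation of a formula with one free variable -/
  neg1 : Formula1 → Formula1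
  /-- the biconditional `α ↔ β` -/
  iffF : Formula → Formula → Formula
  /-- universal quantification `∀x φ(x)` over the free variable -/
  all : Formula1 → Formula
  /-- `subst1 φ n` : the result `φ(n̄)` of substituting the numeral `n̄`
  for the free variable of `φ` -/
  subst1 : Formula1 → ℕ → Formula
  /-- substitution of two numerals for the two free variables -/
  subst2 : Formula2 → ℕ → ℕ → Formula
  /-- substitution of three numerals for the three free variables -/
  subst3 : Formula3 → ℕ → ℕ → ℕ → Formula
  /-- `substSnd F m` : the result `F(x, m̄)` of substituting the numeral `m̄` for the
  second free variable, a formula with the single free variable `x` -/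
  substSnd : Formula2 → ℕ → Formula1
  /-- the Gödel number `⌜α⌝` of a formula -/
  godel : Formula → ℕ
  /-- the Gödel numbering is injective (distinct expressions get distinct codes) -/
  godel_injective : Function.Injective godel
  /-- `Pf x v` : `x` is the Gödel number of a proof in `PA` of the formula with
  Gödel number `v` (Mendelson's arithmetized relation `Pf`) -/
  Pf : ℕ → ℕ → Prop
  /-- `Prf x` : `x` is the Gödel number of a proof in `PA` -/
  Prf : ℕ → Prop
  /-- `cat a b` : the juxtaposition operation `a * b` on Gödel numbers, coding the
  concatenation of the expressions coded by `a` and `b` -/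
  cat : ℕ → ℕ → ℕ
  /-- `NegN v` : the Gödel number of `(¬α)` when `v = ⌜α⌝` -/
  NegN : ℕ → ℕ
  /-- Mendelson's definition `Neg(v) = 2³ * 2⁹ * v * 2⁵` -/
  negN_eq : ∀ v, NegN v = cat (cat (cat (2 ^ 3) (2 ^ 9)) v) (2 ^ 5)
  /-- `Neg ⌜α⌝ = ⌜¬α⌝` -/
  negN_godel : ∀ α, NegN (godel α) = godel (neg α)
  /-- `α` is a theorem of `PA` iff some natural number codes a proof of it -/
  provable_iff : ∀ α, Provable α ↔ ∃ n, Pf n (godel α)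
  /-- a proof is in particular a proof of the formula it ends with -/
  pf_prf : ∀ x v, Pf x v → Prf x
  /-- compatibility of the substitution operations -/
  subst1_substSnd : ∀ F m n, subst1 (substSnd F m) n = subst2 F n m
  /-- substitution commutes with negation -/
  subst1_neg1 : ∀ φ n, subst1 (neg1 φ) n = neg (subst1 φ n)
  /-- substituting a numeral for the only free variable yields a sentence -/
  isSentence_subst1 : ∀ φ n, IsSentence (subst1 φ n)
  /-- biconditional elimination, left to right -/
  iff_mp : ∀ a b, Provable (iffF a b) → Provable a → Provable b
  /-- biconditional elimination, right to left -/
  iff_mpr : ∀ a b, Provable (iffF a b) → Provable b → Provable a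
  /-- Rule A4 (particularization) : from `⊢ ∀x φ(x)` infer `⊢ φ(n̄)` -/
  spec : ∀ φ n, Provable (all φ) → Provable (subst1 φ n)
  /-- from a contradiction every formula is provable -/
  explosion : ∀ a b, Provable a → Provable (neg a) → Provable b
  /-- the relation `Pf` is primitive recursive (its characteristic function,
  `0` where it holds and `1` otherwise, is primitive recursive) -/
  pf_primrec : Nat.Primrec fun n => if Pf n.unpair.1 n.unpair.2 then 0 else 1
  /-- the relation `Prf` is primitive recursive -/
  prf_primrec : Nat.Primrec fun n => if Prf n then 0 else 1
  /-- the function `Neg` is primitive recursive -/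
  negN_primrec : Nat.Primrec NegN

namespace PASystem

variable (S : PASystem)

/-- `Rf x v` : `x` is the Gödel number of a proof in `PA` of the negation of the
formula with Gödel number `v`, i.e. of a refutation in `PA` of that formula. -/
def Rf (x v : ℕ) : Prop := S.Pf x (S.NegN v)

/-- `Ref x` : `Neg(x)` is the Gödel number of a proof in `PA`
(Mendelson-style: `Prf(v) ∧ v = Neg(x)`). -/
def Ref (x : ℕ) : Prop := S.Prf (S.NegN x)

/-- `PA` is consistent : no formula is provable together with its negation. -/
def Consistent : Prop := ¬ ∃ α : S.Formula, S.Provable α ∧ S.Provable (S.neg α)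

/-- the existential quantifier `∃x φ(x)`, Mendelson's abbreviation for `¬∀x ¬φ(x)` -/
def ex (φ : S.Formula1) : S.Formula := S.neg (S.all (S.neg1 φ))

/-- `PA` is ω-consistent : there is no formula `ψ(x)` such that `⊢ ∃x ψ(x)` while
`⊢ ¬ψ(n̄)` for every natural number `n`. -/
def OmegaConsistent : Prop :=
  ¬ ∃ φ : S.Formula1, S.Provable (S.ex φ) ∧ ∀ n : ℕ, S.Provable (S.neg (S.subst1 φ n))

/-- the binary relation `R` is expressible in `PA` by the formula `F` : whenever
`R n m` holds, `⊢ F(n̄, m̄)`, and whenever it fails, `⊢ ¬F(n̄, m̄)`. -/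
def Expresses2 (R : ℕ → ℕ → Prop) (F : S.Formula2) : Prop :=
  (∀ n m : ℕ, R n m → S.Provable (S.subst2 F n m)) ∧
  (∀ n m : ℕ, ¬ R n m → S.Provable (S.neg (S.subst2 F n m)))

/-- the binary function `f` is representable in `PA` by the formula `F` :
`⊢ F(n̄, m̄, f(n,m)‾)`, and `⊢ ¬F(n̄, m̄, k̄)` whenever `k ≠ f(n,m)`. -/
def Represents2 (f : ℕ → ℕ → ℕ) (F : S.Formula3) : Prop :=
  (∀ n m : ℕ, S.Provable (S.subst3 F n m (f n m))) ∧
  (∀ n m k : ℕ, k ≠ f n m → S.Provable (S.neg (S.subst3 F n m k)))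

end PASystem

/-- the characteristic function of a binary relation :
value `0` on pairs where the relation holds and `1` otherwise -/
noncomputable def charFun (R : ℕ → ℕ → Prop) : ℕ → ℕ → ℕ := fun n m => if R n m then 0 else 1

/-- **Gödel's first incompleteness, part (a).** Given a sentence `δ` with
`⊢_PA δ ↔ ∀x ¬Pf*(x, ⌜δ⌝‾)` (diagonalization applied to `∀x ¬Pf*(x, v)`), if
`⊢_PA δ` then `PA` is inconsistent; equivalently, if `PA` is consistent then `δ`
is not provable in `PA`. -/
theorem goedel_first_a (S : PASystem) (PfStar : S.Formula2)
    (hexpr : S.Expresses2 S.Pf PfStar)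
    (δ : S.Formula) (hsent : S.IsSentence δ)
    (hfix : S.Provable (S.iffF δ (S.all (S.neg1 (S.substSnd PfStar (S.godel δ))))))
    (hδ : S.Provable δ) :
    ¬ S.Consistent := by
  intro hcons
  obtain ⟨n, hn⟩ := (S.provable_iff δ).1 hδ
  have h1 : S.Provable (S.subst2 PfStar n (S.godel δ)) := hexpr.1 n (S.godel δ) hn
  have h2 : S.Provable (S.all (S.neg1 (S.substSnd PfStar (S.godel δ)))) :=
    S.iff_mp _ _ hfix hδ
  have h3 := S.spec _ n h2
  rw [S.subst1_neg1, S.subst1_substSnd] at h3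
  exact hcons ⟨_, h1, h3⟩
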